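/- Let G' be a weighted graph containing source s and sink t, where s is joined to each vertex of a set S by an edge of capacity c > 0, and suppose (U', V'∖U') is a minimum s–t cut with s ∈ U'. Let U = U'∖{s} and let T be a set of terminals with S ⊆ T. Then the weight of the cut edges of U inside the original graph G (i.e., excluding edges incident to s or t) is at most |U ∩ T| · c. -/
import Mathlib


/-- Min-cut comparison for the CutOrFlow construction: the weight of the cut
edges of `U = U' \ {s}` inside the original graph (excluding edges incident to
`s` or `t`) is at most `|U ∩ T| · c`. -/
theorem stmt_5 {V : Type*} [Fintype V] [DecidableEq V]
    (w : V → V → ℝ) (hsymm : ∀ u v, w u v = w v u) (hnn : ∀ u v, 0 ≤ w u v)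
    (s t : V) (hst : s ≠ t)
    (S T : Finset V) (hST : S ⊆ T) (hsT : s ∉ T) (htT : t ∉ T)
    (c : ℝ) (hc : 0 < c)
    (hsrc : ∀ v ∈ S, w s v = c) (hsrc0 : ∀ v, v ≠ s → v ∉ S → w s v = 0)
    (U' : Finset V) (hsU : s ∈ U') (htU : t ∉ U')
    (hmin : ∀ U'' : Finset V, s ∈ U'' → t ∉ U'' →
      (∑ u ∈ U', ∑ v ∈ U'ᶜ, w u v) ≤ ∑ u ∈ U'', ∑ v ∈ U''ᶜ, w u v) :
    (∑ u ∈ U' \ {s}, ∑ v ∈ U'ᶜ \ {t}, w u v) ≤ (((U' \ {s}) ∩ T).card : ℝ) * c := by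
  classical
  have hsS : s ∉ S := fun h => hsT (hST h)
  have htriv : (∑ u ∈ ({s} : Finset V), ∑ v ∈ ({s} : Finset V)ᶜ, w u v)
      = (S.card : ℝ) * c := by
    rw [Finset.sum_singleton]
    have hsub : S ⊆ ({s} : Finset V)ᶜ := fun v hv =>
      Finset.mem_compl.2 (by rintro h; rw [Finset.mem_singleton] at h; subst h; exact hsS hv)
    rw [← Finset.sum_subset hsub (fun v hv hvS =>
      hsrc0 v (by simpa using Finset.mem_compl.1 hv) hvS)]
    rw [Finset.sum_congr rfl (fun v hv => hsrc v hv), Finset.sum_const, nsmul_eq_mul]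
  have hmin' := hmin {s} (Finset.mem_singleton_self s) (by simp [Ne.symm hst])
  rw [htriv] at hmin'
  have hsplit : (∑ u ∈ U', ∑ v ∈ U'ᶜ, w u v)
      = (∑ v ∈ U'ᶜ, w s v) + ∑ u ∈ U' \ {s}, ∑ v ∈ U'ᶜ, w u v := by
    rw [Finset.sdiff_singleton_eq_erase, add_comm, Finset.sum_erase_add U' _ hsU]
  have hsrow : (∑ v ∈ U'ᶜ, w s v) = ((S ∩ U'ᶜ).card : ℝ) * c := by
    have h1 : (∑ v ∈ U'ᶜ, w s v) = ∑ v ∈ S ∩ U'ᶜ, w s v := by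
      rw [← Finset.sum_subset Finset.inter_subset_right]
      intro v hv hvS
      refine hsrc0 v ?_ ?_
      · rintro rfl; exact (Finset.mem_compl.1 hv) hsU
      · intro h; exact hvS (Finset.mem_inter.2 ⟨h, hv⟩)
    rw [h1, Finset.sum_congr rfl (fun v hv => hsrc v (Finset.mem_inter.1 hv).1),
      Finset.sum_const, nsmul_eq_mul]
  have hle1 : (∑ u ∈ U' \ {s}, ∑ v ∈ U'ᶜ \ {t}, w u v)
      ≤ ∑ u ∈ U' \ {s}, ∑ v ∈ U'ᶜ, w u v :=
    Finset.sum_le_sum fun u _ => Finset.sum_le_sum_of_subset_of_nonneg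
      Finset.sdiff_subset (fun v _ _ => hnn u v)
  have hcard : (S ∩ U').card + (S ∩ U'ᶜ).card = S.card := by
    rw [← Finset.card_union_of_disjoint, ← Finset.inter_union_distrib_left,
      Finset.union_compl, Finset.inter_univ]
    exact Finset.disjoint_left.2 fun v hv hv' =>
      (Finset.mem_compl.1 (Finset.mem_inter.1 hv').2) (Finset.mem_inter.1 hv).2
  have hsub2 : S ∩ U' ⊆ (U' \ {s}) ∩ T := by
    intro v hv
    obtain ⟨hv1, hv2⟩ := Finset.mem_inter.1 hv
    refine Finset.mem_inter.2 ⟨Finset.mem_sdiff.2 ⟨hv2, ?_⟩, hST hv1⟩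
    rw [Finset.mem_singleton]; rintro rfl; exact hsS hv1
  have hcard2 : ((S ∩ U').card : ℝ) ≤ (((U' \ {s}) ∩ T).card : ℝ) := by
    exact_mod_cast Finset.card_le_card hsub2
  have hc1 : ((S ∩ U').card : ℝ) + ((S ∩ U'ᶜ).card : ℝ) = (S.card : ℝ) := by
    exact_mod_cast hcard
  have := hmin'
  rw [hsplit, hsrow] at this
  nlinarith [hle1, hcard2, hc1, hc.le]
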